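/- Let s ∈ (0,1) and let (c_k)_{k≥1} be a nondecreasing sequence of positive real numbers. Suppose there exist D > 0 and k₁ ∈ ℕ such that c_{k+1} − c_k ≤ D c_{k+1}^{s} for all k ≥ k₁. Then the sequence χ_k := c_k · k^{−1/(1−s)} is bounded, i.e. there exists a constant C > 0 with c_k ≤ C k^{1/(1−s)} for all k ≥ 1. -/

import Mathlib

/-!
Put `u k = c k ^ (1 - s)`. For `0 < b ≤ a` one has `a ^ (1 - s) - b ^ (1 - s) ≤ (a - b) / a ^ s`,
so the recursion `c (k + 1) - c k ≤ D * c (k + 1) ^ s` makes every increment of `u` at most `D`.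
Hence `u` grows at most linearly, and `c k = u k ^ (1 / (1 - s)) = O(k ^ (1 / (1 - s)))`.
-/

open Real Finset

theorem exists_le_mul_of_eventually_add_le {f : ℕ → ℝ} {A : ℝ} {k₀ : ℕ} (hA : 0 ≤ A)
    (h : ∀ k, k₀ ≤ k → f (k + 1) ≤ f k + A) :
    ∃ C : ℝ, 0 < C ∧ ∀ k, 1 ≤ k → f k ≤ C * k := by
  set M := ∑ i ∈ range (k₀ + 1), |f i|
  have hM : 0 ≤ M := sum_nonneg fun i _ => abs_nonneg (f i)
  have initial : ∀ k, k ≤ k₀ → f k ≤ M := fun k hk =>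
    (le_abs_self _).trans <|
      single_le_sum (fun i _ => abs_nonneg (f i)) (mem_range.2 (Nat.lt_succ_of_le hk))
  have affine : ∀ k, f k ≤ M + A * k := by
    intro k
    rcases le_total k k₀ with hk | hk
    · nlinarith [initial k hk, (Nat.cast_nonneg k : (0 : ℝ) ≤ k)]
    · induction k, hk using Nat.le_induction with
      | base => nlinarith [initial k₀ le_rfl, (Nat.cast_nonneg k₀ : (0 : ℝ) ≤ k₀)]
      | succ k hk ih => push_cast; linarith [h k hk]
  refine ⟨M + A + 1, by positivity, fun k hk => ?_⟩
  have hk' : (1 : ℝ) ≤ k := by exact_mod_cast hk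
  nlinarith [affine k]

theorem rpow_one_sub_sub_rpow_one_sub_le {a b s : ℝ} (hb : 0 < b) (hba : b ≤ a) (hs : 0 ≤ s) :
    a ^ (1 - s) - b ^ (1 - s) ≤ (a - b) / a ^ s := by
  have ha : 0 < a := hb.trans_le hba
  have has : 0 < a ^ s := rpow_pos_of_pos ha s
  have hb_le : b ≤ b ^ (1 - s) * a ^ s :=
    calc b = b ^ (1 - s) * b ^ s := by rw [← rpow_add hb, sub_add_cancel, rpow_one]
      _ ≤ b ^ (1 - s) * a ^ s := by gcongr
  rw [rpow_sub ha, rpow_one, sub_div]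
  have : b / a ^ s ≤ b ^ (1 - s) := (div_le_iff₀ has).2 hb_le
  linarith

theorem rpow_one_sub_le_add_of_sub_le_mul_rpow {a b s D : ℝ} (ha : 0 < a) (hb : 0 < b)
    (hs0 : 0 ≤ s) (hs1 : s ≤ 1) (hD : 0 ≤ D) (h : a - b ≤ D * a ^ s) :
    a ^ (1 - s) ≤ b ^ (1 - s) + D := by
  rcases le_total a b with hab | hba
  · have := rpow_le_rpow ha.le hab (sub_nonneg.2 hs1)
    linarith
  · have hincr := rpow_one_sub_sub_rpow_one_sub_le hb hba hs0
    have : (a - b) / a ^ s ≤ D := (div_le_iff₀ (rpow_pos_of_pos ha s)).2 h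
    linarith

theorem stmt_1_general (s : ℝ) (hs0 : 0 < s) (hs1 : s < 1) (c : ℕ → ℝ)
    (hpos : ∀ k, 1 ≤ k → 0 < c k)
    (D : ℝ) (hD : 0 < D) (k₁ : ℕ)
    (hrec : ∀ k, k₁ ≤ k → c (k + 1) - c k ≤ D * c (k + 1) ^ s) :
    ∃ C : ℝ, 0 < C ∧ ∀ k, 1 ≤ k → c k ≤ C * (k : ℝ) ^ (1 / (1 - s)) := by
  obtain ⟨C, hC, hlin⟩ := exists_le_mul_of_eventually_add_le (f := fun k => c k ^ (1 - s))
    (k₀ := k₁ + 1) hD.le fun k hk =>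
      rpow_one_sub_le_add_of_sub_le_mul_rpow (hpos (k + 1) (by omega)) (hpos k (by omega))
        hs0.le hs1.le hD.le (hrec k (by omega))
  refine ⟨C ^ (1 / (1 - s)), by positivity, fun k hk => ?_⟩
  have h1s : 0 < 1 - s := sub_pos.2 hs1
  calc c k = (c k ^ (1 - s)) ^ (1 / (1 - s)) := by
        rw [← rpow_mul (hpos k hk).le, mul_one_div_cancel h1s.ne', rpow_one]
    _ ≤ (C * k) ^ (1 / (1 - s)) :=
        rpow_le_rpow (rpow_nonneg (hpos k hk).le _) (hlin k hk) (by positivity)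
    _ = C ^ (1 / (1 - s)) * (k : ℝ) ^ (1 / (1 - s)) := mul_rpow hC.le k.cast_nonneg

theorem stmt_1 (s : ℝ) (hs0 : 0 < s) (hs1 : s < 1) (c : ℕ → ℝ)
    (hpos : ∀ k, 1 ≤ k → 0 < c k)
    (hmono : ∀ k, 1 ≤ k → c k ≤ c (k + 1))
    (D : ℝ) (hD : 0 < D) (k₁ : ℕ)
    (hrec : ∀ k, k₁ ≤ k → c (k + 1) - c k ≤ D * c (k + 1) ^ s) :
    ∃ C : ℝ, 0 < C ∧ ∀ k, 1 ≤ k → c k ≤ C * (k : ℝ) ^ (1 / (1 - s)) :=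
  stmt_1_general s hs0 hs1 c hpos D hD k₁ hrec
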